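/- Let R be a subring of ℂ closed under complex conjugation and let F = {a/b : a, b ∈ R, b ≠ 0}, a subfield of ℂ. Let α ∈ ℂ be algebraic over F whose minimal polynomial p over F has all of its coefficients in R and has degree d, and let R[α] denote the smallest subring of ℂ containing R and α; assume conj α ∈ R[α] (so R[α] is closed under complex conjugation). If Φ is a pre-embedding of dimension k from R[α] to R, then Λ := Φ₀(α) is normal (Λ * Λᴴ = Λᴴ * Λ) and there exists a positive integer c such that the characteristic polynomial of Λ equals p^c (viewing p as a polynomial over ℂ); that is, Λ is a normal pseudo-companion matrix for p. -/

import Mathlib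

open Matrix

/-- A *pre-embedding of dimension `k` from `S` to `R`* (for `S R : Subring ℂ`, each closed
under complex conjugation): a family `toFun` assigning to every square complex matrix indexed
by a finite type `ι` (with all entries in `S`) a complex matrix indexed by `ι × Fin k` with all
entries in `R`, together with a fixed nonzero orthogonal projector `proj` on `Fin k` (the
catalytic projector), satisfying multiplicativity, additivity, unitality, compatibility with
conjugate transpose, compatibility with Kronecker products by matrices over `R ∩ S`, and the
catalytic condition `Φ(A) * (1 ⊗ Π) = A ⊗ Π`. -/
structure PreEmbedding (k : ℕ) (S R : Subring ℂ) : Type 1 where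
  toFun : ∀ (ι : Type) [Fintype ι] [DecidableEq ι],
    Matrix ι ι ℂ → Matrix (ι × Fin k) (ι × Fin k) ℂ
  proj : Matrix (Fin k) (Fin k) ℂ
  hS_conj : ∀ z ∈ S, (starRingEnd ℂ) z ∈ S
  hR_conj : ∀ z ∈ R, (starRingEnd ℂ) z ∈ R
  proj_ne_zero : proj ≠ 0
  proj_herm : proj.conjTranspose = proj
  proj_idem : proj * proj = proj
  mem_R : ∀ (ι : Type) [Fintype ι] [DecidableEq ι] (A : Matrix ι ι ℂ),
    (∀ i j, A i j ∈ S) → ∀ p q, toFun ι A p q ∈ R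
  map_mul : ∀ (ι : Type) [Fintype ι] [DecidableEq ι] (A B : Matrix ι ι ℂ),
    (∀ i j, A i j ∈ S) → (∀ i j, B i j ∈ S) → toFun ι (A * B) = toFun ι A * toFun ι B
  map_add : ∀ (ι : Type) [Fintype ι] [DecidableEq ι] (A B : Matrix ι ι ℂ),
    (∀ i j, A i j ∈ S) → (∀ i j, B i j ∈ S) → toFun ι (A + B) = toFun ι A + toFun ι B
  map_one : ∀ (ι : Type) [Fintype ι] [DecidableEq ι], toFun ι (1 : Matrix ι ι ℂ) = 1
  map_conjTranspose : ∀ (ι : Type) [Fintype ι] [DecidableEq ι] (A : Matrix ι ι ℂ),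
    (∀ i j, A i j ∈ S) → toFun ι Aᴴ = (toFun ι A)ᴴ
  map_kronecker : ∀ (ι κ : Type) [Fintype ι] [DecidableEq ι] [Fintype κ] [DecidableEq κ]
    (C : Matrix ι ι ℂ) (A : Matrix κ κ ℂ),
    (∀ i j, C i j ∈ R) → (∀ i j, C i j ∈ S) → (∀ i j, A i j ∈ S) →
    toFun (ι × κ) (Matrix.kroneckerMap (· * ·) C A) =
      Matrix.reindex (Equiv.prodAssoc ι κ (Fin k)).symm (Equiv.prodAssoc ι κ (Fin k)).symm
        (Matrix.kroneckerMap (· * ·) C (toFun κ A))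
  catalytic : ∀ (ι : Type) [Fintype ι] [DecidableEq ι] (A : Matrix ι ι ℂ),
    (∀ i j, A i j ∈ S) →
    toFun ι A * Matrix.kroneckerMap (· * ·) (1 : Matrix ι ι ℂ) proj =
      Matrix.kroneckerMap (· * ·) A proj

/-- `Φ₀ s`: the pre-embedding applied to the `1 × 1` matrix with entry `s`, reindexed to a
matrix indexed by `Fin k`. -/
def PreEmbedding.apply0 {k : ℕ} {S R : Subring ℂ} (E : PreEmbedding k S R) (s : ℂ) :
    Matrix (Fin k) (Fin k) ℂ :=
  Matrix.reindex (Equiv.punitProd (Fin k)) (Equiv.punitProd (Fin k))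
    (E.toFun Unit (Matrix.of fun _ _ => s))

open Polynomial

/-!
On `S = R[α]`, `Φ₀` is a ring homomorphism that commutes with conjugation and is linear over
`R ∩ S`. Hence `Λ = Φ₀(α)` is normal because `α` commutes with `conj α`, and
`p(Λ) = Φ₀(p(α)) = 0`, so every eigenvalue of `Λ` is a root of `p`. The entries of `Λ` lie in
`R`, so its characteristic polynomial has coefficients in the fraction field `K` of `R`. Minimality
makes `p` the minimal polynomial of `α` over `K`, hence irreducible over `K`, and a monic
polynomial over `K` whose complex roots are all roots of `p` is a power of `p`.
-/

theorem Matrix.charpoly_coeff_mem {n A : Type*} [Fintype n] [DecidableEq n] [CommRing A]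
    {T : Subring A} {M : Matrix n n A} (hM : ∀ i j, M i j ∈ T) (m : ℕ) :
    M.charpoly.coeff m ∈ T := by
  have hmap : (of fun i j => (⟨M i j, hM i j⟩ : T)).map T.subtype = M := rfl
  rw [← hmap, charpoly_map, coeff_map]
  exact SetLike.coe_mem _

theorem Matrix.eval_eq_zero_of_isRoot_charpoly {n 𝕜 : Type*} [Fintype n] [DecidableEq n]
    [Nonempty n] [Field 𝕜] {M : Matrix n n 𝕜} {p : 𝕜[X]} (hp : aeval M p = 0) {z : 𝕜}
    (hz : M.charpoly.IsRoot z) : p.eval z = 0 := by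
  simpa [hp, spectrum.zero_eq] using
    spectrum.subset_polynomial_aeval M p ⟨z, mem_spectrum_iff_isRoot_charpoly.2 hz, rfl⟩

theorem Polynomial.exists_monic_map_eq_of_coeff_mem {L : Type*} [Field L] {K : Subfield L}
    {f : L[X]} (hf : f.Monic) (hK : ∀ m, f.coeff m ∈ K) :
    ∃ g : K[X], g.Monic ∧ g.map (algebraMap K L) = f := by
  have hlifts : f ∈ lifts (algebraMap K L) :=
    (lifts_iff_coeff_lifts f).2 fun m => ⟨⟨_, hK m⟩, rfl⟩
  obtain ⟨g, hg, -, hgm⟩ := lifts_and_degree_eq_and_monic hlifts hf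
  exact ⟨g, hgm, hg⟩

/-- Each irreducible factor of `Q` shares a root with `P`, so both are the minimal polynomial of
that root. -/
theorem Polynomial.Monic.exists_eq_pow_of_rootSet_subset {K L : Type*} [Field K] [Field L]
    [IsAlgClosed L] [Algebra K L] {P Q : K[X]} (hQm : Q.Monic) (hP : Irreducible P)
    (hPm : P.Monic) (hroots : Q.rootSet L ⊆ P.rootSet L) : ∃ c : ℕ, Q = P ^ c := by
  classical
  suffices h : ∀ {m}, m ∈ UniqueFactorizationMonoid.normalizedFactors Q → m = P by
    obtain ⟨c, hc⟩ :=
      UniqueFactorizationMonoid.exists_associated_prime_pow_of_unique_normalized_factor h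
        hQm.ne_zero
    exact ⟨c, (eq_of_monic_of_associated (hPm.pow c) hQm hc).symm⟩
  intro m hm
  have hmirr := UniqueFactorizationMonoid.irreducible_of_normalized_factor m hm
  have hmm : m.Monic :=
    UniqueFactorizationMonoid.normalize_normalized_factor m hm ▸ monic_normalize hmirr.ne_zero
  obtain ⟨z, hz⟩ := IsAlgClosed.exists_aeval_eq_zero L m (degree_pos_of_irreducible hmirr).ne'
  have hzQ : z ∈ Q.rootSet L := by
    obtain ⟨r, hr⟩ := UniqueFactorizationMonoid.dvd_of_mem_normalizedFactors hm
    exact hQm.mem_rootSet.2 (by simp [hr, hz])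
  rw [minpoly.eq_of_irreducible_of_monic hmirr hz hmm,
    minpoly.eq_of_irreducible_of_monic hP (hPm.mem_rootSet.1 (hroots hzQ)) hPm]

theorem Matrix.exists_charpoly_eq_pow_of_aeval_eq_zero {n L : Type*} [Fintype n]
    [DecidableEq n] [Nonempty n] [Field L] [IsAlgClosed L] {K : Subfield L} {M : Matrix n n L}
    (hM : ∀ m, M.charpoly.coeff m ∈ K) {P : K[X]} (hP : Irreducible P) (hPm : P.Monic)
    (hPM : aeval M (P.map (algebraMap K L)) = 0) :
    ∃ c : ℕ, 0 < c ∧ M.charpoly = P.map (algebraMap K L) ^ c := by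
  obtain ⟨Q, hQm, hQM⟩ := exists_monic_map_eq_of_coeff_mem (charpoly_monic M) hM
  have hroots : Q.rootSet L ⊆ P.rootSet L := by
    intro z hz
    have hzM : M.charpoly.IsRoot z := by
      rw [← hQM, IsRoot, eval_map, ← aeval_def]
      exact hQm.mem_rootSet.1 hz
    rw [hPm.mem_rootSet, aeval_def, ← eval_map]
    exact eval_eq_zero_of_isRoot_charpoly hPM hzM
  obtain ⟨c, hQP⟩ := hQm.exists_eq_pow_of_rootSet_subset hP hPm hroots
  have hcharpoly : M.charpoly = P.map (algebraMap K L) ^ c := by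
    rw [← hQM, hQP, Polynomial.map_pow]
  refine ⟨c, Nat.pos_of_ne_zero fun hc => (Fintype.card_pos (α := n)).ne' ?_, hcharpoly⟩
  simpa [hcharpoly, hc] using (charpoly_natDegree_eq_dim M).symm

theorem Subfield.exists_eq_div_of_mem_closure {L : Type*} [Field L] {R : Subring L} {z : L}
    (hz : z ∈ Subfield.closure (R : Set L)) :
    ∃ a ∈ R, ∃ b ∈ R, b ≠ 0 ∧ z = a / b := by
  obtain ⟨a, ha, b, hb, rfl⟩ := Subfield.mem_closure_iff.1 hz
  rw [Subring.closure_eq] at ha hb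
  rcases eq_or_ne b 0 with rfl | hb0
  · exact ⟨0, R.zero_mem, 1, R.one_mem, one_ne_zero, by simp⟩
  · exact ⟨a, ha, b, hb, hb0, rfl⟩

namespace PreEmbedding

variable {k : ℕ} {S R : Subring ℂ}

theorem dim_pos (E : PreEmbedding k S R) : 0 < k := by
  rcases Nat.eq_zero_or_pos k with rfl | hk
  · exact absurd (Matrix.ext fun i => Fin.elim0 i) E.proj_ne_zero
  · exact hk

variable (E : PreEmbedding k S R)

theorem apply0_mem {s : ℂ} (hs : s ∈ S) (i j : Fin k) : E.apply0 s i j ∈ R :=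
  E.mem_R Unit _ (fun _ _ => hs) _ _

theorem apply0_mul {s t : ℂ} (hs : s ∈ S) (ht : t ∈ S) :
    E.apply0 (s * t) = E.apply0 s * E.apply0 t := by
  have hof : (of fun _ _ => s * t : Matrix Unit Unit ℂ) =
      of (fun _ _ => s) * of fun _ _ => t := by
    ext; simp [mul_apply]
  rw [apply0, hof,
    E.map_mul Unit (of fun _ _ => s) (of fun _ _ => t) (fun _ _ => hs) (fun _ _ => ht)]
  simp [apply0, submatrix_mul_equiv]

theorem apply0_add {s t : ℂ} (hs : s ∈ S) (ht : t ∈ S) :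
    E.apply0 (s + t) = E.apply0 s + E.apply0 t := by
  have hof : (of fun _ _ => s + t : Matrix Unit Unit ℂ) = of (fun _ _ => s) + of fun _ _ => t :=
    rfl
  rw [apply0, hof,
    E.map_add Unit (of fun _ _ => s) (of fun _ _ => t) (fun _ _ => hs) (fun _ _ => ht)]
  simp [apply0, submatrix_add]

theorem apply0_one : E.apply0 1 = 1 := by
  have hof : (of fun _ _ => 1 : Matrix Unit Unit ℂ) = 1 := by ext; simp [one_apply]
  simp [apply0, hof, E.map_one Unit]

theorem apply0_conj {s : ℂ} (hs : s ∈ S) : E.apply0 (starRingEnd ℂ s) = (E.apply0 s)ᴴ := by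
  have hof : (of fun _ _ => starRingEnd ℂ s : Matrix Unit Unit ℂ) = (of fun _ _ => s)ᴴ := by
    ext; simp [conjTranspose_apply]
  rw [apply0, hof, E.map_conjTranspose Unit (of fun _ _ => s) (fun _ _ => hs)]
  simp [apply0, conjTranspose_submatrix]

def apply0RingHom : S →+* Matrix (Fin k) (Fin k) ℂ :=
  RingHom.mk' ⟨⟨fun s => E.apply0 s, E.apply0_one⟩, fun s t => E.apply0_mul s.2 t.2⟩
    fun s t => E.apply0_add s.2 t.2

theorem apply0_pow {s : ℂ} (hs : s ∈ S) (n : ℕ) : E.apply0 (s ^ n) = E.apply0 s ^ n :=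
  map_pow E.apply0RingHom ⟨s, hs⟩ n

theorem apply0_sum {ι : Type*} (t : Finset ι) {f : ι → ℂ} (hf : ∀ i, f i ∈ S) :
    E.apply0 (∑ i ∈ t, f i) = ∑ i ∈ t, E.apply0 (f i) := by
  rw [show ∑ i ∈ t, f i = ((∑ i ∈ t, ⟨f i, hf i⟩ : S) : ℂ) by simp]
  exact map_sum E.apply0RingHom _ t

theorem apply0_mul_left {c s : ℂ} (hcR : c ∈ R) (hcS : c ∈ S) (hs : s ∈ S) :
    E.apply0 (c * s) = c • E.apply0 s := by
  -- `Φ` on `[c] ⊗ [s] = [1] ⊗ [c * s]`, read through `map_kronecker` in two ways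
  have hof : kroneckerMap (· * ·) (of fun _ _ => c : Matrix Unit Unit ℂ)
      (of fun _ _ => s : Matrix Unit Unit ℂ) = kroneckerMap (· * ·)
      (of fun _ _ => 1 : Matrix Unit Unit ℂ) (of fun _ _ => c * s : Matrix Unit Unit ℂ) := by
    ext; simp
  have key := E.map_kronecker Unit Unit (of fun _ _ => c) (of fun _ _ => s)
    (fun _ _ => hcR) (fun _ _ => hcS) (fun _ _ => hs)
  rw [hof, E.map_kronecker Unit Unit (of fun _ _ => 1) (of fun _ _ => c * s)
    (fun _ _ => R.one_mem) (fun _ _ => S.one_mem) (fun _ _ => S.mul_mem hcS hs)] at key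
  ext i j
  simpa [apply0] using congr_fun₂ key (((), ()), i) (((), ()), j)

theorem apply0_eval {q : ℂ[X]} (hqR : ∀ m, q.coeff m ∈ R) (hqS : ∀ m, q.coeff m ∈ S)
    {s : ℂ} (hs : s ∈ S) : E.apply0 (q.eval s) = aeval (E.apply0 s) q := by
  rw [eval_eq_sum_range, aeval_eq_sum_range,
    E.apply0_sum _ fun i => S.mul_mem (hqS i) (S.pow_mem hs i)]
  simp only [E.apply0_mul_left (hqR _) (hqS _) (S.pow_mem hs _), E.apply0_pow hs]

theorem apply0_mul_conjTranspose_comm {s : ℂ} (hs : s ∈ S) (hs' : starRingEnd ℂ s ∈ S) :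
    E.apply0 s * (E.apply0 s)ᴴ = (E.apply0 s)ᴴ * E.apply0 s := by
  rw [← E.apply0_conj hs, ← E.apply0_mul hs hs', ← E.apply0_mul hs' hs, mul_comm]

end PreEmbedding

theorem preEmbedding_apply0_isPseudoCompanion_general (k : ℕ) (R : Subring ℂ)
    (F : Set ℂ) (hF : F = {z : ℂ | ∃ a ∈ R, ∃ b ∈ R, b ≠ 0 ∧ z = a / b})
    (α : ℂ)
    (p : Polynomial ℂ)
    (hp_monic : p.Monic) (hp_coeffR : ∀ m, p.coeff m ∈ R)
    (hp_root : p.eval α = 0)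
    (hp_min : ∀ q : Polynomial ℂ, (∀ m, q.coeff m ∈ F) → q ≠ 0 → q.eval α = 0 →
      p.degree ≤ q.degree)
    (hconjα : (starRingEnd ℂ) α ∈ Subring.closure (insert α (R : Set ℂ)))
    (E : PreEmbedding k (Subring.closure (insert α (R : Set ℂ))) R) :
    E.apply0 α * (E.apply0 α)ᴴ = (E.apply0 α)ᴴ * E.apply0 α ∧
    ∃ c : ℕ, 0 < c ∧ (E.apply0 α).charpoly = p ^ c := by
  have hαS : α ∈ Subring.closure (insert α (R : Set ℂ)) :=
    Subring.subset_closure (Set.mem_insert _ _)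
  have hRS : ∀ z ∈ R, z ∈ Subring.closure (insert α (R : Set ℂ)) :=
    fun z hz => Subring.subset_closure (Set.mem_insert_of_mem _ hz)
  refine ⟨E.apply0_mul_conjTranspose_comm hαS hconjα, ?_⟩
  set K := Subfield.closure (R : Set ℂ)
  have hRK : ∀ z ∈ R, z ∈ K := fun z hz => Subfield.subset_closure hz
  obtain ⟨P, hPm, rfl⟩ := exists_monic_map_eq_of_coeff_mem hp_monic fun m => hRK _ (hp_coeffR m)
  have hPα : aeval α P = 0 := by rwa [aeval_def, ← eval_map]
  have hPmin : P = minpoly K α := by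
    refine minpoly.unique K α hPm hPα fun q hqm hqα => ?_
    have hqF : ∀ m, (q.map (algebraMap K ℂ)).coeff m ∈ F := fun m =>
      hF ▸ Subfield.exists_eq_div_of_mem_closure (by rw [coeff_map]; exact (q.coeff m).2)
    have := hp_min _ hqF (map_ne_zero hqm.ne_zero) (by rwa [eval_map, ← aeval_def])
    rwa [degree_map, degree_map] at this
  have : Nonempty (Fin k) := Fin.pos_iff_nonempty.1 E.dim_pos
  refine exists_charpoly_eq_pow_of_aeval_eq_zero
    (fun m => hRK _ (charpoly_coeff_mem (E.apply0_mem hαS) m))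
    (hPmin ▸ minpoly.irreducible ⟨P, hPm, hPα⟩) hPm ?_
  rw [← E.apply0_eval hp_coeffR (fun m => hRS _ (hp_coeffR m)) hαS, hp_root]
  exact map_zero E.apply0RingHom

/-- Theorem `standard`, necessity. If `Φ` is a pre-embedding of dimension
`k` from `R[α]` to `R`, where the minimal polynomial `p` of `α` over `F = Frac(R)` has all
coefficients in `R`, then `Λ = Φ₀(α)` is a normal pseudo-companion matrix for `p`: `Λ` is
normal and its characteristic polynomial is `p ^ c` for some positive integer `c`. -/
theorem preEmbedding_apply0_isPseudoCompanion (k : ℕ) (R : Subring ℂ)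
    (hR : ∀ z ∈ R, (starRingEnd ℂ) z ∈ R)
    (F : Set ℂ) (hF : F = {z : ℂ | ∃ a ∈ R, ∃ b ∈ R, b ≠ 0 ∧ z = a / b})
    (α : ℂ)
    (p : Polynomial ℂ) (d : ℕ)
    (hp_monic : p.Monic) (hp_coeffF : ∀ m, p.coeff m ∈ F) (hp_coeffR : ∀ m, p.coeff m ∈ R)
    (hp_root : p.eval α = 0) (hp_deg : p.natDegree = d)
    (hp_min : ∀ q : Polynomial ℂ, (∀ m, q.coeff m ∈ F) → q ≠ 0 → q.eval α = 0 →
      p.degree ≤ q.degree)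
    (hconjα : (starRingEnd ℂ) α ∈ Subring.closure (insert α (R : Set ℂ)))
    (E : PreEmbedding k (Subring.closure (insert α (R : Set ℂ))) R) :
    E.apply0 α * (E.apply0 α)ᴴ = (E.apply0 α)ᴴ * E.apply0 α ∧
    ∃ c : ℕ, 0 < c ∧ (E.apply0 α).charpoly = p ^ c :=
  preEmbedding_apply0_isPseudoCompanion_general k R F hF α p hp_monic hp_coeffR hp_root hp_min
    hconjα E
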